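/- Uniform L¹ law of large numbers for the jump rates (core of the one block estimate, Lemma 3.4): for every φ₀ > 0 there is a constant C = C(g, a, b, φ₀) such that for every finite set B, every environment p : B → [a,b] and every φ ∈ [0,φ₀], the product measure ν^{B,p}_φ := ⊗_{x∈B} ν¹_{φ/p_x} satisfies ∫ | (1/|B|)·Σ_{x∈B} (p_x·g(η(x)) − φ) | dν^{B,p}_φ(η) ≤ C/√|B|. (Here the random variables p_x·g(η(x)) are independent under ν^{B,p}_φ, each with mean φ.) -/

import Mathlib

open scoped BigOperators
open MeasureTheory

/-- The "generalized factorial" `g(n)! = g(1)·g(2)···g(n)`, with `g(0)! = 1`. -/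
noncomputable def gfact (g : ℕ → ℝ) (n : ℕ) : ℝ := ∏ i ∈ Finset.Icc 1 n, g i

/-- The partition function `Z(φ) = Σ_{n≥0} φⁿ/g(n)!`. -/
noncomputable def Zfun (g : ℕ → ℝ) (φ : ℝ) : ℝ := ∑' n : ℕ, φ ^ n / gfact g n

/-- The one-site marginal `ν¹_φ(n) = φⁿ/(Z(φ)·g(n)!)`. -/
noncomputable def nu1 (g : ℕ → ℝ) (φ : ℝ) (n : ℕ) : ℝ := φ ^ n / (Zfun g φ * gfact g n)

/-- The one-site marginal `ν¹_φ` as a measure on `ℕ`. -/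
noncomputable def nuM (g : ℕ → ℝ) (φ : ℝ) : Measure ℕ :=
  Measure.sum fun n => (ENNReal.ofReal (nu1 g φ n)) • Measure.dirac n

/-!
The weights of `ν¹_ψ` satisfy `g(n+1) ν¹_ψ(n+1) = ψ ν¹_ψ(n)`, so `E[g · h] = ψ E[h(· + 1)]`
for every `h`. With `h = 1` this gives mean `ψ`; with `h = g` and `g(n+1) ≤ g(n) + g*` it gives
`E[g²] ≤ ψ (ψ + g*)`, i.e. `Var g ≤ g* ψ`. Hence `p_x g(η(x))` has mean `φ` and variance at most
`p_x g* φ ≤ b g* φ₀`. The coordinates are independent under the product measure, so the average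
has variance at most `b g* φ₀ / |B|`, and its L¹ norm is bounded by its L² norm.
-/

open ProbabilityTheory

section OneSite

variable {g : ℕ → ℝ} {g₀ gstar ψ : ℝ}

lemma gfact_succ (g : ℕ → ℝ) (n : ℕ) : gfact g (n + 1) = gfact g n * g (n + 1) :=
  Finset.prod_Icc_succ_top (Nat.le_add_left 1 n) g

lemma pow_mul_factorial_le_gfact (hg₀ : 0 ≤ g₀) (hlin : ∀ n, g₀ * n ≤ g n) (n : ℕ) :
    g₀ ^ n * n.factorial ≤ gfact g n := by
  induction n with
  | zero => simp [gfact]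
  | succ n ih =>
    rw [gfact_succ, pow_succ, Nat.factorial_succ, Nat.cast_mul]
    have hpos : (0 : ℝ) ≤ g₀ ^ n * n.factorial := by positivity
    calc g₀ ^ n * g₀ * (((n + 1 : ℕ) : ℝ) * n.factorial)
        = g₀ ^ n * n.factorial * (g₀ * (n + 1 : ℕ)) := by ring
      _ ≤ gfact g n * g (n + 1) := mul_le_mul ih (hlin _) (by positivity) (hpos.trans ih)

lemma gfact_pos (hg₀ : 0 < g₀) (hlin : ∀ n, g₀ * n ≤ g n) (n : ℕ) : 0 < gfact g n :=
  (by positivity : 0 < g₀ ^ n * n.factorial).trans_le (pow_mul_factorial_le_gfact hg₀.le hlin n)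

lemma summable_pow_div_gfact (hg₀ : 0 < g₀) (hlin : ∀ n, g₀ * n ≤ g n) (ψ : ℝ) :
    Summable fun n => ψ ^ n / gfact g n := by
  refine .of_norm_bounded (Real.summable_pow_div_factorial (|ψ| / g₀)) fun n => ?_
  rw [norm_div, norm_pow, Real.norm_eq_abs, Real.norm_of_nonneg (gfact_pos hg₀ hlin n).le,
    div_pow, div_div]
  exact div_le_div_of_nonneg_left (by positivity) (by positivity)
    (pow_mul_factorial_le_gfact hg₀.le hlin n)

lemma one_le_Zfun (hg₀ : 0 < g₀) (hlin : ∀ n, g₀ * n ≤ g n) (hψ : 0 ≤ ψ) : 1 ≤ Zfun g ψ := by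
  calc (1 : ℝ) = ψ ^ 0 / gfact g 0 := by simp [gfact]
    _ ≤ Zfun g ψ := (summable_pow_div_gfact hg₀ hlin ψ).le_tsum 0
      fun n _ => div_nonneg (pow_nonneg hψ n) (gfact_pos hg₀ hlin n).le

lemma nu1_nonneg (hg₀ : 0 < g₀) (hlin : ∀ n, g₀ * n ≤ g n) (hψ : 0 ≤ ψ) (n : ℕ) :
    0 ≤ nu1 g ψ n :=
  div_nonneg (pow_nonneg hψ n)
    (mul_nonneg (zero_le_one.trans (one_le_Zfun hg₀ hlin hψ)) (gfact_pos hg₀ hlin n).le)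

lemma hasSum_nu1 (hg₀ : 0 < g₀) (hlin : ∀ n, g₀ * n ≤ g n) (hψ : 0 ≤ ψ) :
    HasSum (nu1 g ψ) 1 := by
  have hZ : Zfun g ψ ≠ 0 := (zero_lt_one.trans_le (one_le_Zfun hg₀ hlin hψ)).ne'
  have h : nu1 g ψ = fun n => ψ ^ n / gfact g n / Zfun g ψ :=
    funext fun n => by rw [nu1, mul_comm, div_div]
  rw [h, ← div_self hZ]
  exact (summable_pow_div_gfact hg₀ hlin ψ).hasSum.div_const _

lemma nu1_succ_mul {n : ℕ} (hg : g (n + 1) ≠ 0) :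
    nu1 g ψ (n + 1) * g (n + 1) = ψ * nu1 g ψ n := by
  rw [nu1, nu1, gfact_succ, pow_succ]
  field_simp

lemma hasSum_nu1_mul_g_mul (hgzero : g 0 = 0) (hg : ∀ n, g (n + 1) ≠ 0) {h : ℕ → ℝ} {s : ℝ}
    (hs : HasSum (fun n => nu1 g ψ n * h (n + 1)) s) :
    HasSum (fun n => nu1 g ψ n * (g n * h n)) (ψ * s) := by
  have hshift : (fun n => nu1 g ψ (n + 1) * (g (n + 1) * h (n + 1)))
      = fun n => ψ * (nu1 g ψ n * h (n + 1)) :=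
    funext fun n => by rw [← mul_assoc, nu1_succ_mul (hg n), mul_assoc]
  have := (hasSum_nat_add_iff (f := fun n => nu1 g ψ n * (g n * h n)) 1).mp
    (hshift ▸ hs.mul_left ψ)
  rwa [Finset.sum_range_one, hgzero, zero_mul, mul_zero, add_zero] at this

lemma g_nonneg (hg₀ : 0 < g₀) (hlin : ∀ n, g₀ * n ≤ g n) (n : ℕ) : 0 ≤ g n :=
  (by positivity : 0 ≤ g₀ * n).trans (hlin n)

lemma g_succ_pos (hg₀ : 0 < g₀) (hlin : ∀ n, g₀ * n ≤ g n) (n : ℕ) : 0 < g (n + 1) :=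
  (by positivity : 0 < g₀ * (n + 1 : ℕ)).trans_le (hlin _)

lemma hasSum_nu1_mul_g (hg₀ : 0 < g₀) (hlin : ∀ n, g₀ * n ≤ g n) (hgzero : g 0 = 0)
    (hψ : 0 ≤ ψ) : HasSum (fun n => nu1 g ψ n * g n) ψ := by
  simpa using hasSum_nu1_mul_g_mul (h := fun _ => 1) (s := 1) hgzero
    (fun n => (g_succ_pos hg₀ hlin n).ne') (by simpa using hasSum_nu1 hg₀ hlin hψ)

lemma exists_hasSum_nu1_mul_g_sq_le (hg₀ : 0 < g₀) (hlin : ∀ n, g₀ * n ≤ g n) (hgzero : g 0 = 0)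
    (hstep : ∀ n, g (n + 1) ≤ g n + gstar) (hψ : 0 ≤ ψ) :
    ∃ s ≤ ψ * (ψ + gstar), HasSum (fun n => nu1 g ψ n * g n ^ 2) s := by
  have hbound : HasSum (fun n => nu1 g ψ n * (g n + gstar)) (ψ + gstar) := by
    simpa only [mul_add, one_mul] using
      (hasSum_nu1_mul_g hg₀ hlin hgzero hψ).add ((hasSum_nu1 hg₀ hlin hψ).mul_right gstar)
  have hle : ∀ n, nu1 g ψ n * g (n + 1) ≤ nu1 g ψ n * (g n + gstar) := fun n =>
    mul_le_mul_of_nonneg_left (hstep n) (nu1_nonneg hg₀ hlin hψ n)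
  have hsum : Summable fun n => nu1 g ψ n * g (n + 1) :=
    hbound.summable.of_nonneg_of_le
      (fun n => mul_nonneg (nu1_nonneg hg₀ hlin hψ n) (g_nonneg hg₀ hlin _)) hle
  refine ⟨ψ * ∑' n, nu1 g ψ n * g (n + 1), ?_, ?_⟩
  · exact mul_le_mul_of_nonneg_left (hasSum_le hle hsum.hasSum hbound) hψ
  · simpa only [sq] using
      hasSum_nu1_mul_g_mul hgzero (fun n => (g_succ_pos hg₀ hlin n).ne') hsum.hasSum

lemma integral_nuM (hν : ∀ n, 0 ≤ nu1 g ψ n) (f : ℕ → ℝ) :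
    ∫ n, f n ∂nuM g ψ = ∑' n, nu1 g ψ n * f n := by
  rw [nuM, integral_sum_dirac fun n => ENNReal.ofReal_ne_top]
  simp only [ENNReal.toReal_ofReal (hν _), smul_eq_mul]

lemma integrable_nuM_iff (hν : ∀ n, 0 ≤ nu1 g ψ n) {f : ℕ → ℝ} :
    Integrable f (nuM g ψ) ↔ Summable fun n => nu1 g ψ n * |f n| := by
  rw [nuM, integrable_sum_dirac_iff fun n => ENNReal.ofReal_ne_top]
  simp only [ENNReal.toReal_ofReal (hν _), Real.norm_eq_abs]

lemma isProbabilityMeasure_nuM (hg₀ : 0 < g₀) (hlin : ∀ n, g₀ * n ≤ g n) (hψ : 0 ≤ ψ) :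
    IsProbabilityMeasure (nuM g ψ) := by
  constructor
  rw [nuM, Measure.sum_apply _ MeasurableSet.univ]
  simp only [Measure.smul_apply, measure_univ, smul_eq_mul, mul_one]
  rw [← ENNReal.ofReal_tsum_of_nonneg (nu1_nonneg hg₀ hlin hψ) (hasSum_nu1 hg₀ hlin hψ).summable,
    (hasSum_nu1 hg₀ hlin hψ).tsum_eq, ENNReal.ofReal_one]

lemma integral_g_nuM (hg₀ : 0 < g₀) (hlin : ∀ n, g₀ * n ≤ g n) (hgzero : g 0 = 0)
    (hψ : 0 ≤ ψ) : ∫ n, g n ∂nuM g ψ = ψ := by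
  rw [integral_nuM (nu1_nonneg hg₀ hlin hψ), (hasSum_nu1_mul_g hg₀ hlin hgzero hψ).tsum_eq]

lemma memLp_two_g_nuM (hg₀ : 0 < g₀) (hlin : ∀ n, g₀ * n ≤ g n) (hgzero : g 0 = 0)
    (hstep : ∀ n, g (n + 1) ≤ g n + gstar) (hψ : 0 ≤ ψ) : MemLp g 2 (nuM g ψ) := by
  obtain ⟨s, -, hs⟩ := exists_hasSum_nu1_mul_g_sq_le hg₀ hlin hgzero hstep hψ
  refine (memLp_two_iff_integrable_sq .of_discrete).mpr ?_
  rw [integrable_nuM_iff (nu1_nonneg hg₀ hlin hψ)]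
  simpa only [abs_sq] using hs.summable

lemma variance_g_nuM_le (hg₀ : 0 < g₀) (hlin : ∀ n, g₀ * n ≤ g n) (hgzero : g 0 = 0)
    (hstep : ∀ n, g (n + 1) ≤ g n + gstar) (hψ : 0 ≤ ψ) : Var[g; nuM g ψ] ≤ gstar * ψ := by
  have := isProbabilityMeasure_nuM hg₀ hlin hψ
  obtain ⟨s, hsle, hs⟩ := exists_hasSum_nu1_mul_g_sq_le hg₀ hlin hgzero hstep hψ
  rw [variance_eq_sub (memLp_two_g_nuM hg₀ hlin hgzero hstep hψ),
    integral_g_nuM hg₀ hlin hgzero hψ]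
  have h2 : ∫ n, (g ^ 2) n ∂nuM g ψ = s := by
    rw [integral_nuM (nu1_nonneg hg₀ hlin hψ)]
    exact hs.tsum_eq
  rw [h2]
  linarith

end OneSite

section WeakLLN

variable {Ω : Type*} [MeasurableSpace Ω] {μ : Measure Ω} [IsProbabilityMeasure μ]

lemma sq_integral_abs_le_integral_sq {Y : Ω → ℝ} (hY : MemLp Y 2 μ) :
    (∫ ω, |Y ω| ∂μ) ^ 2 ≤ ∫ ω, Y ω ^ 2 ∂μ := by
  have h := variance_nonneg |Y| μ
  rw [variance_eq_sub hY.abs] at h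
  simpa only [Pi.pow_apply, Pi.abs_apply, sq_abs, sub_nonneg] using h

lemma integral_abs_sub_integral_le_sqrt_variance {X : Ω → ℝ} (hX : MemLp X 2 μ) :
    ∫ ω, |X ω - μ[X]| ∂μ ≤ √(Var[X; μ]) := by
  rw [variance_eq_integral hX.aemeasurable]
  exact Real.le_sqrt_of_sq_le (sq_integral_abs_le_integral_sq (hX.sub (memLp_const _)))

end WeakLLN

lemma integral_abs_average_sub_le_pi {ι : Type*} [Fintype ι] {Ω : ι → Type*}
    [∀ i, MeasurableSpace (Ω i)] {μ : ∀ i, Measure (Ω i)} [∀ i, IsProbabilityMeasure (μ i)]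
    {X : ∀ i, Ω i → ℝ} (hX : ∀ i, MemLp (X i) 2 (μ i)) {m V : ℝ}
    (hm : ∀ i, ∫ x, X i x ∂μ i = m) (hV : ∀ i, Var[X i; μ i] ≤ V) :
    ∫ ω, |(1 / (Fintype.card ι : ℝ)) * ∑ i, (X i (ω i) - m)| ∂Measure.pi μ
      ≤ √V / √(Fintype.card ι) := by
  set N : ℝ := (Fintype.card ι : ℝ)
  set S : (∀ i, Ω i) → ℝ := ∑ i, fun ω => X i (ω i) with hS
  have hcoord : ∀ i, MemLp (fun ω : ∀ i, Ω i => X i (ω i)) 2 (Measure.pi μ) := fun i =>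
    (hX i).comp_measurePreserving (measurePreserving_eval _ i)
  have hmean : (Measure.pi μ)[S] = N * m := by
    simp only [hS, Finset.sum_apply]
    rw [integral_finsetSum _ fun i _ => (hcoord i).integrable one_le_two]
    simp [integral_comp_eval (hX _).aestronglyMeasurable, hm, N]
  have hvar : Var[S; Measure.pi μ] ≤ N * V := by
    rw [hS, variance_sum_pi hX]
    simpa using Finset.sum_le_sum fun i (_ : i ∈ Finset.univ) => hV i
  have hrewrite : ∀ ω,
      |(1 / N) * ∑ i, (X i (ω i) - m)| = (1 / N) * |S ω - (Measure.pi μ)[S]| := by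
    intro ω
    rw [hmean, abs_mul, abs_of_nonneg (by positivity), hS]
    simp [Finset.sum_sub_distrib, N]
  simp_rw [hrewrite]
  rw [integral_const_mul]
  have hN : 0 ≤ N := Nat.cast_nonneg _
  calc 1 / N * ∫ ω, |S ω - (Measure.pi μ)[S]| ∂Measure.pi μ
      ≤ 1 / N * √(Var[S; Measure.pi μ]) := by
        gcongr
        exact integral_abs_sub_integral_le_sqrt_variance (memLp_finsetSum' _ fun i _ => hcoord i)
    _ ≤ 1 / N * √(N * V) := by gcongr
    _ = √V / √N := by
      rcases hN.eq_or_lt with hN0 | hNpos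
      · simp [← hN0]
      · rw [Real.sqrt_mul hN]
        field_simp
        rw [Real.sq_sqrt hN]

theorem uniform_L1_LLN_jump_rates_general
    (g : ℕ → ℝ) (g₀ gstar : ℝ) (hg₀ : 0 < g₀)
    (hgzero : g 0 = 0)
    (hLip : ∀ n, |g (n + 1) - g n| ≤ gstar)
    (hlin : ∀ n, g₀ * n ≤ g n)
    (a b : ℝ) (ha : 0 < a)
    (φ₀ : ℝ) :
    ∃ C : ℝ, ∀ (B : Type) [Fintype B] (p : B → ℝ), (∀ x, p x ∈ Set.Icc a b) →
      ∀ φ ∈ Set.Icc (0 : ℝ) φ₀,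
      ∫ η, |(1 / (Fintype.card B : ℝ)) * ∑ x, (p x * g (η x) - φ)|
          ∂(Measure.pi fun x => nuM g (φ / p x)) ≤
        C / Real.sqrt (Fintype.card B) := by
  have hstep n : g (n + 1) ≤ g n + gstar := by linarith [(abs_le.mp (hLip n)).2]
  have hgstar : 0 ≤ gstar := (abs_nonneg _).trans (hLip 0)
  refine ⟨√(b * gstar * φ₀), fun B _ p hp φ hφ => ?_⟩
  have hpos x : 0 < p x := ha.trans_le (hp x).1
  have hψ x : 0 ≤ φ / p x := div_nonneg hφ.1 (hpos x).le
  have := fun x => isProbabilityMeasure_nuM hg₀ hlin (hψ x)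
  refine integral_abs_average_sub_le_pi (X := fun x n => p x * g n)
    (fun x => (memLp_two_g_nuM hg₀ hlin hgzero hstep (hψ x)).const_mul (p x)) (fun x => ?_)
    (fun x => ?_)
  · rw [integral_const_mul, integral_g_nuM hg₀ hlin hgzero (hψ x), mul_div_cancel₀ _ (hpos x).ne']
  · calc Var[fun n => p x * g n; nuM g (φ / p x)] = p x ^ 2 * Var[g; nuM g (φ / p x)] :=
          variance_const_mul _ _ _
      _ ≤ p x ^ 2 * (gstar * (φ / p x)) :=
          mul_le_mul_of_nonneg_left (variance_g_nuM_le hg₀ hlin hgzero hstep (hψ x)) (sq_nonneg _)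
      _ = p x * gstar * φ := by field_simp
      _ ≤ b * gstar * φ₀ :=
          mul_le_mul (mul_le_mul_of_nonneg_right (hp x).2 hgstar) hφ.2 hφ.1
            (mul_nonneg ((hpos x).le.trans (hp x).2) hgstar)

/-- Uniform L¹ law of large numbers for the jump rates: for every `φ₀ > 0` there is a
constant `C` such that for every finite index set `B`, environment `p : B → [a,b]` and
fugacity `φ ∈ [0,φ₀]`, the product measure `ν^{B,p}_φ = ⊗_{x∈B} ν¹_{φ/p_x}` satisfies
`∫ |(1/|B|)·Σ_{x∈B} (p_x·g(η(x)) − φ)| dν^{B,p}_φ ≤ C/√|B|`. -/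
theorem uniform_L1_LLN_jump_rates
    (g : ℕ → ℝ) (g₀ gstar : ℝ) (hg₀ : 0 < g₀) (hgs : g₀ ≤ gstar)
    (hgzero : g 0 = 0) (hgpos : ∀ n, 1 ≤ n → 0 < g n)
    (hLip : ∀ n, |g (n + 1) - g n| ≤ gstar)
    (hlin : ∀ n, g₀ * n ≤ g n)
    (a b : ℝ) (ha : 0 < a) (hab : a < b)
    (φ₀ : ℝ) (hφ₀ : 0 < φ₀) :
    ∃ C : ℝ, ∀ (B : Type) [Fintype B] (p : B → ℝ), (∀ x, p x ∈ Set.Icc a b) →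
      ∀ φ ∈ Set.Icc (0 : ℝ) φ₀,
      ∫ η, |(1 / (Fintype.card B : ℝ)) * ∑ x, (p x * g (η x) - φ)|
          ∂(Measure.pi fun x => nuM g (φ / p x)) ≤
        C / Real.sqrt (Fintype.card B) :=
  uniform_L1_LLN_jump_rates_general g g₀ gstar hg₀ hgzero hLip hlin a b ha φ₀
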